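/- arXiv:1701.06126 — 3 statements merged into one kernel-verified Lean document; each statement's English description precedes it below -/
import Mathlib

section
/- Let n ≥ 8 and let F₂ be the 4-graph on [n] with edge set {{1,2,i,j} : 3 ≤ i < j ≤ n} ∪ {{1,3,4,k} : 5 ≤ k ≤ n} ∪ {{1,3,l,m} : 5 ≤ l < m ≤ 7} ∪ {{1,4,l,m} : 5 ≤ l < m ≤ 7} ∪ {{1,5,6,7}} ∪ {{2,3,4,k} : 5 ≤ k ≤ n} ∪ {{2,3,l,m} : 5 ≤ l < m ≤ 7} ∪ {{2,4,l,m} : 5 ≤ l < m ≤ 7}. Then λ(F₂) ≤ 1/64 < 0.0169. -/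
open Finset

/-- The Lagrangian of a hypergraph `G` with vertex set `[n] = {1, …, n}`. -/
noncomputable def lagN (n : ℕ) (G : Finset (Finset ℕ)) : ℝ :=
  sSup {v : ℝ | ∃ x : ℕ → ℝ, (∀ i, 0 ≤ x i) ∧ (∑ i ∈ Finset.Icc 1 n, x i) = 1 ∧
    v = ∑ e ∈ G, ∏ i ∈ e, x i}

/-- The edges `{a, b, i, j}` over all 2-element subsets `{i, j}` of `s`. -/
def pairsWith (a b : ℕ) (s : Finset ℕ) : Finset (Finset ℕ) :=
  (s.powersetCard 2).image (fun p => insert a (insert b p))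

/-- The edges `{a, i, j, k}` over all 3-element subsets `{i, j, k}` of `s`. -/
def triplesWith (a : ℕ) (s : Finset ℕ) : Finset (Finset ℕ) :=
  (s.powersetCard 3).image (insert a)

/-- The edges `{a, b, c, k}` over all `k ∈ s`. -/
def singlesWith (a b c : ℕ) (s : Finset ℕ) : Finset (Finset ℕ) :=
  s.image (fun k => ({a, b, c, k} : Finset ℕ))

/-- The 4-graph `F₂` on `[n]`. -/
def F2 (n : ℕ) : Finset (Finset ℕ) :=
  pairsWith 1 2 (Finset.Icc 3 n) ∪ singlesWith 1 3 4 (Finset.Icc 5 n) ∪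
    pairsWith 1 3 (Finset.Icc 5 7) ∪ pairsWith 1 4 (Finset.Icc 5 7) ∪
    {({1, 5, 6, 7} : Finset ℕ)} ∪ singlesWith 2 3 4 (Finset.Icc 5 n) ∪
    pairsWith 2 3 (Finset.Icc 5 7) ∪ pairsWith 2 4 (Finset.Icc 5 7)

/-! Write `a, b, c, d` for the weights of the vertices `1, 2, 3, 4` and `s` for the total weight
of the vertices `≥ 5`. Sorting the edges by their trace on `{1, 2, 3, 4}`,
`λ(F₂, x) ≤ ab·e₂(x₃, …, xₙ) + (a + b)cd·s + (a + b)(c + d)·e₂(x₅, x₆, x₇) + a·x₅x₆x₇`.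
AM-GM bounds each elementary symmetric function by a power of the corresponding sum; with
`t = a + b` and `u = c + d` this leaves
`t²(1 - t)²/8 + t(u²s/4 + us²/3 + s³/27) ≤ t²(1 - t)²/8 + t(1 - t)³/12 ≤ 1/64`. -/

/-- `λ(G, x)`. -/
noncomputable def lagPoly {α : Type*} (G : Finset (Finset α)) (x : α → ℝ) : ℝ :=
  ∑ e ∈ G, ∏ i ∈ e, x i

section lagPoly

variable {α : Type*} [DecidableEq α] {x : α → ℝ}

lemma lagPoly_union_le_of_le (hx : ∀ i, 0 ≤ x i) {G H : Finset (Finset α)} {a b : ℝ}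
    (hG : lagPoly G x ≤ a) (hH : lagPoly H x ≤ b) : lagPoly (G ∪ H) x ≤ a + b := by
  have hGH := sum_union_inter (s₁ := G) (s₂ := H) (f := fun e => ∏ i ∈ e, x i)
  have hinter : 0 ≤ ∑ e ∈ G ∩ H, ∏ i ∈ e, x i :=
    sum_nonneg fun e _ => prod_nonneg fun i _ => hx i
  unfold lagPoly at *
  linarith

lemma lagPoly_image_le (hx : ∀ i, 0 ≤ x i) {β : Type*} (s : Finset β) (f : β → Finset α) :
    lagPoly (s.image f) x ≤ ∑ p ∈ s, ∏ i ∈ f p, x i :=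
  sum_image_le_of_nonneg fun _ _ => prod_nonneg fun i _ => hx i

lemma sum_powersetCard_two_prod_le (hx : ∀ i, 0 ≤ x i) (s : Finset α) :
    ∑ p ∈ s.powersetCard 2, ∏ i ∈ p, x i ≤ (∑ i ∈ s, x i) ^ 2 / 2 := by
  induction s using Finset.induction_on with
  | empty => simp [powersetCard_eq_empty.2 (card_empty.trans_lt two_pos)]
  | @insert a s ha ih =>
    have hnew : lagPoly ((s.powersetCard 1).image (insert a)) x ≤ x a * ∑ i ∈ s, x i := by
      refine (lagPoly_image_le hx _ _).trans_eq ?_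
      rw [powersetCard_one, sum_map, mul_sum]
      refine sum_congr rfl fun i hi => ?_
      rw [Function.Embedding.coeFn_mk, prod_pair (ne_of_mem_of_not_mem hi ha).symm]
    have hsplit := lagPoly_union_le_of_le hx ih hnew
    have hs : 0 ≤ ∑ i ∈ s, x i := sum_nonneg fun i _ => hx i
    rw [powersetCard_succ_insert ha, sum_insert ha]
    unfold lagPoly at hsplit
    nlinarith [sq_nonneg (x a)]

end lagPoly

lemma sum_Icc_eq_add_sum_Icc {M : Type*} [AddCommMonoid M] {f : ℕ → M} {a b : ℕ} (h : a ≤ b) :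
    ∑ i ∈ Icc a b, f i = f a + ∑ i ∈ Icc (a + 1) b, f i := by
  rw [← insert_Icc_add_one_left_eq_Icc h, sum_insert (by simp)]

section Families

variable {x : ℕ → ℝ}

lemma lagPoly_pairsWith_le (hx : ∀ i, 0 ≤ x i) {a b : ℕ} {t : Finset ℕ}
    (hab : a ≠ b) (hat : a ∉ t) (hbt : b ∉ t) :
    lagPoly (pairsWith a b t) x ≤ x a * x b * ∑ p ∈ t.powersetCard 2, ∏ i ∈ p, x i := by
  refine (lagPoly_image_le hx _ _).trans_eq ?_
  rw [mul_sum]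
  refine sum_congr rfl fun p hp => ?_
  have hpt : p ⊆ t := (mem_powersetCard.1 hp).1
  have hap : a ∉ insert b p := by
    rw [mem_insert, not_or]
    exact ⟨hab, fun h => hat (hpt h)⟩
  rw [prod_insert hap, prod_insert fun h => hbt (hpt h), mul_assoc]

lemma lagPoly_singlesWith_le (hx : ∀ i, 0 ≤ x i) {a b c : ℕ} {t : Finset ℕ}
    (hab : a ≠ b) (hac : a ≠ c) (hbc : b ≠ c) (hat : a ∉ t) (hbt : b ∉ t) (hct : c ∉ t) :
    lagPoly (singlesWith a b c t) x ≤ x a * x b * x c * ∑ k ∈ t, x k := by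
  refine (lagPoly_image_le hx _ _).trans_eq ?_
  rw [mul_sum]
  refine sum_congr rfl fun k hk => ?_
  have hak : a ≠ k := fun h => hat (h ▸ hk)
  have hbk : b ≠ k := fun h => hbt (h ▸ hk)
  have hck : c ≠ k := fun h => hct (h ▸ hk)
  rw [prod_insert (by simp [hab, hac, hak]), prod_insert (by simp [hbc, hbk]), prod_pair hck]
  ring

end Families

section Inequalities

lemma mul_add_mul_add_mul_le_sq_div_three (y z w : ℝ) :
    y * z + y * w + z * w ≤ (y + z + w) ^ 2 / 3 := by
  nlinarith [sq_nonneg (y - z), sq_nonneg (y - w), sq_nonneg (z - w)]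

lemma mul_mul_le_pow_three_div {y z w : ℝ} (hy : 0 ≤ y) (hz : 0 ≤ z) (hw : 0 ≤ w) :
    y * z * w ≤ (y + z + w) ^ 3 / 27 := by
  nlinarith [mul_nonneg hy (sq_nonneg (z - w)), mul_nonneg hz (sq_nonneg (y - w)),
    mul_nonneg hw (sq_nonneg (y - z)), mul_nonneg (mul_nonneg hy hz) hw]

lemma le_add_pow_three_div_twelve {u s : ℝ} (hu : 0 ≤ u) (hs : 0 ≤ s) :
    u ^ 2 / 4 * s + u * (s ^ 2 / 3) + s ^ 3 / 27 ≤ (u + s) ^ 3 / 12 := by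
  nlinarith [mul_nonneg hu (sq_nonneg (6 * u - 5 * s)), mul_nonneg hs (sq_nonneg (u - s)),
    mul_nonneg hu (sq_nonneg u), mul_nonneg hs (sq_nonneg s), mul_nonneg (mul_nonneg hu hu) hs]

lemma quartic_le_one_div_sixtyfour {t : ℝ} (h0 : 0 ≤ t) (h1 : t ≤ 1) :
    t ^ 2 / 4 * ((1 - t) ^ 2 / 2) + t * ((1 - t) ^ 3 / 12) ≤ 1 / 64 := by
  nlinarith [sq_nonneg (2 * t - 1), sq_nonneg (t - 3 / 8), mul_nonneg h0 (sub_nonneg.2 h1),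
    sq_nonneg (2 * t ^ 2 - 1), mul_nonneg (mul_nonneg h0 h0) (sub_nonneg.2 h1),
    sq_nonneg (4 * t ^ 2 + 2 * t - 3)]

lemma F2_bound_le_one_div_sixtyfour {a b c d s y z w : ℝ}
    (ha : 0 ≤ a) (hb : 0 ≤ b) (hc : 0 ≤ c) (hd : 0 ≤ d) (hy : 0 ≤ y) (hz : 0 ≤ z) (hw : 0 ≤ w)
    (hyzw : y + z + w ≤ s) (hsum : a + b + c + d + s = 1) :
    a * b * ((c + d + s) ^ 2 / 2) + (a + b) * (c * d) * s
      + (a + b) * (c + d) * (y * z + y * w + z * w) + a * (y * z * w) ≤ 1 / 64 := by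
  have hs : 0 ≤ s := by linarith
  have hyzw0 : 0 ≤ y + z + w := by linarith
  have hQ : y * z + y * w + z * w ≤ s ^ 2 / 3 :=
    (mul_add_mul_add_mul_le_sq_div_three y z w).trans (by gcongr)
  have hT : y * z * w ≤ s ^ 3 / 27 := (mul_mul_le_pow_three_div hy hz hw).trans (by gcongr)
  have hab : a * b ≤ (a + b) ^ 2 / 4 := by nlinarith [sq_nonneg (a - b)]
  have hcd : c * d ≤ (c + d) ^ 2 / 4 := by nlinarith [sq_nonneg (c - d)]
  have hcds : c + d + s = 1 - (a + b) := by linarith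
  have hcub := le_add_pow_three_div_twelve (add_nonneg hc hd) hs
  rw [hcds] at hcub
  calc _ ≤ (a + b) ^ 2 / 4 * ((c + d + s) ^ 2 / 2)
        + (a + b) * ((c + d) ^ 2 / 4 * s + (c + d) * (s ^ 2 / 3) + s ^ 3 / 27) := by
        have h1 : a * b * ((c + d + s) ^ 2 / 2) ≤ (a + b) ^ 2 / 4 * ((c + d + s) ^ 2 / 2) := by
          gcongr
        have h2 : (a + b) * (c * d) * s ≤ (a + b) * ((c + d) ^ 2 / 4) * s := by gcongr
        have h3 : (a + b) * (c + d) * (y * z + y * w + z * w)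
            ≤ (a + b) * (c + d) * (s ^ 2 / 3) := by gcongr
        have h4 : a * (y * z * w) ≤ (a + b) * (s ^ 3 / 27) := by
          gcongr
          linarith
        linarith
    _ ≤ (a + b) ^ 2 / 4 * ((1 - (a + b)) ^ 2 / 2) + (a + b) * ((1 - (a + b)) ^ 3 / 12) := by
        rw [hcds]
        gcongr
    _ ≤ 1 / 64 := quartic_le_one_div_sixtyfour (by positivity) (by linarith)

end Inequalities

lemma lagPoly_F2_le {n : ℕ} (hn : 4 ≤ n) {x : ℕ → ℝ} (hx : ∀ i, 0 ≤ x i) :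
    lagPoly (F2 n) x ≤
      x 1 * x 2 * ((x 3 + x 4 + ∑ i ∈ Icc 5 n, x i) ^ 2 / 2)
        + (x 1 + x 2) * (x 3 * x 4) * ∑ i ∈ Icc 5 n, x i
        + (x 1 + x 2) * (x 3 + x 4) * (x 5 * x 6 + x 5 * x 7 + x 6 * x 7)
        + x 1 * (x 5 * x 6 * x 7) := by
  set s := ∑ i ∈ Icc 5 n, x i
  set Q := x 5 * x 6 + x 5 * x 7 + x 6 * x 7
  have hP : ∑ p ∈ (Icc 3 n).powersetCard 2, ∏ i ∈ p, x i ≤ (x 3 + x 4 + s) ^ 2 / 2 := by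
    have h34 : ∑ i ∈ Icc 3 n, x i = x 3 + x 4 + s := by
      simp only [sum_Icc_eq_add_sum_Icc (show 3 ≤ n by omega),
        sum_Icc_eq_add_sum_Icc (show 4 ≤ n by omega), Nat.reduceAdd, add_assoc, s]
    exact h34 ▸ sum_powersetCard_two_prod_le hx _
  have hQ : ∑ p ∈ (Icc 5 7).powersetCard 2, ∏ i ∈ p, x i = Q := by
    rw [show (Icc 5 7).powersetCard 2 = {{5, 6}, {5, 7}, {6, 7}} by decide, sum_insert (by decide),
      sum_pair (by decide), prod_pair (by decide), prod_pair (by decide), prod_pair (by decide),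
      ← add_assoc]
  calc lagPoly (F2 n) x
      ≤ x 1 * x 2 * ((x 3 + x 4 + s) ^ 2 / 2) + x 1 * x 3 * x 4 * s + x 1 * x 3 * Q
        + x 1 * x 4 * Q + x 1 * (x 5 * x 6 * x 7) + x 2 * x 3 * x 4 * s + x 2 * x 3 * Q
        + x 2 * x 4 * Q := by
        unfold F2
        repeat' refine lagPoly_union_le_of_le hx ?_ ?_
        · exact (lagPoly_pairsWith_le hx (by norm_num) (by simp) (by simp)).trans
            (mul_le_mul_of_nonneg_left hP (mul_nonneg (hx 1) (hx 2)))
        · exact lagPoly_singlesWith_le hx (by norm_num) (by norm_num) (by norm_num) (by simp)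
            (by simp) (by simp)
        · exact (lagPoly_pairsWith_le hx (by norm_num) (by simp) (by simp)).trans_eq (by rw [hQ])
        · exact (lagPoly_pairsWith_le hx (by norm_num) (by simp) (by simp)).trans_eq (by rw [hQ])
        · rw [lagPoly, sum_singleton, prod_insert (by decide), prod_insert (by decide),
            prod_pair (by decide), mul_assoc]
        · exact lagPoly_singlesWith_le hx (by norm_num) (by norm_num) (by norm_num) (by simp)
            (by simp) (by simp)
        · exact (lagPoly_pairsWith_le hx (by norm_num) (by simp) (by simp)).trans_eq (by rw [hQ])
        · exact (lagPoly_pairsWith_le hx (by norm_num) (by simp) (by simp)).trans_eq (by rw [hQ])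
    _ = _ := by ring

/-- For `n ≥ 8`, `λ(F₂) ≤ 1/64 < 0.0169`. -/
theorem lagrangian_F2 (n : ℕ) (hn : 8 ≤ n) :
    lagN n (F2 n) ≤ 1 / 64 ∧ (1 / 64 : ℝ) < 0.0169 := by
  refine ⟨Real.sSup_le ?_ (by norm_num), by norm_num⟩
  rintro v ⟨x, hx, hxsum, rfl⟩
  have hsum : x 1 + x 2 + x 3 + x 4 + ∑ i ∈ Icc 5 n, x i = 1 := by
    simpa only [sum_Icc_eq_add_sum_Icc (show 1 ≤ n by omega),
      sum_Icc_eq_add_sum_Icc (show 2 ≤ n by omega), sum_Icc_eq_add_sum_Icc (show 3 ≤ n by omega),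
      sum_Icc_eq_add_sum_Icc (show 4 ≤ n by omega), Nat.reduceAdd, add_assoc] using hxsum
  have h567 : x 5 + x 6 + x 7 ≤ ∑ i ∈ Icc 5 n, x i := by
    calc x 5 + x 6 + x 7 = ∑ i ∈ Icc 5 7, x i := by
          simp [sum_Icc_eq_add_sum_Icc, add_assoc]
      _ ≤ ∑ i ∈ Icc 5 n, x i :=
          sum_le_sum_of_subset_of_nonneg (Icc_subset_Icc_right (by omega)) fun i _ _ => hx i
  exact (lagPoly_F2_le (by omega) hx).trans
    (F2_bound_le_one_div_sixtyfour (hx 1) (hx 2) (hx 3) (hx 4) (hx 5) (hx 6) (hx 7) h567 hsum)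
end

section
/- Let n ≥ 8 and let F₄ be the 4-graph on [n] with edge set {{1,2,i,j} : 3 ≤ i < j ≤ n} ∪ {{1,3,4,k} : 5 ≤ k ≤ n} ∪ {{1,3,5,l} : 6 ≤ l ≤ n} ∪ {{1,4,5,l} : 6 ≤ l ≤ n} ∪ {{2,3,4,k} : 5 ≤ k ≤ n} ∪ {{2,3,5,l} : 6 ≤ l ≤ n} ∪ {{2,4,5,l} : 6 ≤ l ≤ n}. Then λ(F₄) ≤ 4/243 < 0.0169. -/
open Finset

/-- The 4-graph `F₄` on `[n]`. -/
def F4 (n : ℕ) : Finset (Finset ℕ) :=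
  pairsWith 1 2 (Finset.Icc 3 n) ∪ singlesWith 1 3 4 (Finset.Icc 5 n) ∪
    singlesWith 1 3 5 (Finset.Icc 6 n) ∪ singlesWith 1 4 5 (Finset.Icc 6 n) ∪
    singlesWith 2 3 4 (Finset.Icc 5 n) ∪ singlesWith 2 3 5 (Finset.Icc 6 n) ∪
    singlesWith 2 4 5 (Finset.Icc 6 n)

/-! Put `P = x₁ + x₂` and `Q = 1 - P`. The edges through both `1` and `2` contribute
`x₁ x₂ e₂(x₃, …, xₙ) ≤ (P² / 4) (Q² / 2)`. Every other edge contains exactly one of `1`, `2`, and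
lumping the vertices `6, …, n` into one weight `S`, the rest of it runs over the triples of
`{3, 4, 5, S}`; so these edges contribute `P e₃(x₃, x₄, x₅, S) ≤ P Q³ / 16` by Maclaurin's
inequality. Hence `λ(F₄) ≤ P Q² (1 + P) / 16`, which stays below `4 / 243` on `[0, 1]`. -/

section Finset

variable {α : Type*} [DecidableEq α]

theorem sum_union_le_add {M : Type*} [AddCommMonoid M] [PartialOrder M] [IsOrderedAddMonoid M]
    (A B : Finset α) {f : α → M} (hf : 0 ≤ f) :
    ∑ e ∈ A ∪ B, f e ≤ ∑ e ∈ A, f e + ∑ e ∈ B, f e := by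
  rw [← sum_union_inter]
  exact le_add_of_nonneg_right (sum_nonneg fun e _ => hf e)

theorem sum_Icc_eq_add_sum_Icc_add_one {M : Type*} [AddCommMonoid M] {a b : ℕ} (h : a ≤ b)
    (f : ℕ → M) : ∑ i ∈ Icc a b, f i = f a + ∑ i ∈ Icc (a + 1) b, f i := by
  rw [Icc_add_one_left_eq_Ioc, add_sum_Ioc_eq_sum_Icc h]

section CommSemiring

variable {R : Type*} [CommSemiring R]

theorem sum_prod_image_insert {a : α} {T : Finset (Finset α)} (ha : ∀ t ∈ T, a ∉ t)
    (x : α → R) : ∑ e ∈ T.image (insert a), ∏ i ∈ e, x i = x a * ∑ t ∈ T, ∏ i ∈ t, x i := by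
  rw [sum_image fun t ht u hu h => ?_, mul_sum]
  · exact sum_congr rfl fun t ht => prod_insert (ha t ht)
  · rw [← erase_insert (ha t ht), h, erase_insert (ha u hu)]

theorem sum_prod_powersetCard_succ_insert {a : α} {s : Finset α} (ha : a ∉ s) (k : ℕ)
    (x : α → R) :
    ∑ t ∈ (insert a s).powersetCard (k + 1), ∏ i ∈ t, x i =
      ∑ t ∈ s.powersetCard (k + 1), ∏ i ∈ t, x i + x a * ∑ t ∈ s.powersetCard k, ∏ i ∈ t, x i := by
  have ha' : ∀ t ∈ s.powersetCard k, a ∉ t := fun t ht hat => ha ((mem_powersetCard.1 ht).1 hat)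
  rw [powersetCard_succ_insert ha, sum_union, sum_prod_image_insert ha']
  rw [disjoint_left]
  rintro _ ht hu
  obtain ⟨u, -, rfl⟩ := mem_image.1 hu
  exact ha ((mem_powersetCard.1 ht).1 (mem_insert_self a u))

theorem sum_prod_pairsWith {a b : ℕ} {s : Finset ℕ} (hab : a ≠ b) (ha : a ∉ s) (hb : b ∉ s)
    (x : ℕ → R) :
    ∑ e ∈ pairsWith a b s, ∏ i ∈ e, x i = x a * x b * ∑ t ∈ s.powersetCard 2, ∏ i ∈ t, x i := by
  have hsub : ∀ t ∈ s.powersetCard 2, t ⊆ s := fun t ht => (mem_powersetCard.1 ht).1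
  have hpairs : pairsWith a b s = ((s.powersetCard 2).image (insert b)).image (insert a) := by
    rw [image_image]; rfl
  rw [hpairs, sum_prod_image_insert, sum_prod_image_insert, mul_assoc]
  · exact fun t ht hbt => hb (hsub t ht hbt)
  · simp only [mem_image, forall_exists_index, and_imp]
    rintro _ t ht rfl
    simp only [mem_insert, not_or]
    exact ⟨hab, fun h => ha (hsub t ht h)⟩

theorem sum_prod_singlesWith {a b c : ℕ} {s : Finset ℕ} (hab : a ≠ b) (hac : a ≠ c)
    (hbc : b ≠ c) (ha : a ∉ s) (hb : b ∉ s) (hc : c ∉ s) (x : ℕ → R) :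
    ∑ e ∈ singlesWith a b c s, ∏ i ∈ e, x i = x a * x b * x c * ∑ k ∈ s, x k := by
  rw [singlesWith, sum_image, mul_sum]
  · refine sum_congr rfl fun k hk => ?_
    have hka := ne_of_mem_of_not_mem hk ha
    have hkb := ne_of_mem_of_not_mem hk hb
    have hkc := ne_of_mem_of_not_mem hk hc
    rw [prod_insert (by simp [*, hka.symm]), prod_insert (by simp [*, hkb.symm]),
      prod_insert (by simp [hkc.symm]), prod_singleton]
    ring
  · intro k hk l _ h
    have hk' : k ∈ ({a, b, c, l} : Finset ℕ) := by
      rw [← show ({a, b, c, k} : Finset ℕ) = {a, b, c, l} from h]; simp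
    simp only [mem_insert, mem_singleton] at hk'
    have := ne_of_mem_of_not_mem hk ha
    have := ne_of_mem_of_not_mem hk hb
    have := ne_of_mem_of_not_mem hk hc
    tauto

end CommSemiring

theorem two_mul_sum_powersetCard_two_le_sq {R : Type*} [CommRing R] [LinearOrder R]
    [IsStrictOrderedRing R] (s : Finset α) (x : α → R) :
    2 * ∑ t ∈ s.powersetCard 2, ∏ i ∈ t, x i ≤ (∑ i ∈ s, x i) ^ 2 := by
  induction s using Finset.induction_on with
  | empty => simp [powersetCard_eq_empty.2 (by simp : (∅ : Finset α).card < 2)]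
  | insert a s ha ih =>
    have h1 : ∑ t ∈ s.powersetCard 1, ∏ i ∈ t, x i = ∑ i ∈ s, x i := by simp [powersetCard_one]
    rw [sum_prod_powersetCard_succ_insert ha, h1, sum_insert ha]
    nlinarith [sq_nonneg (x a)]

end Finset

theorem esymm_three_le_cube_div_sixteen {c d e s : ℝ} (hc : 0 ≤ c) (hd : 0 ≤ d) (he : 0 ≤ e)
    (hs : 0 ≤ s) : c * d * e + c * d * s + c * e * s + d * e * s ≤ (c + d + e + s) ^ 3 / 16 := by
  nlinarith [mul_nonneg hc (sq_nonneg (d - e)), mul_nonneg hd (sq_nonneg (c - e)),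
    mul_nonneg he (sq_nonneg (c - d)), mul_nonneg hs (sq_nonneg (c - d)),
    mul_nonneg hs (sq_nonneg (c - e)), mul_nonneg hs (sq_nonneg (d - e)),
    mul_nonneg hc (sq_nonneg (d - s)), mul_nonneg hd (sq_nonneg (c - s)),
    mul_nonneg he (sq_nonneg (c - s)), mul_nonneg hc (sq_nonneg (e - s)),
    mul_nonneg hd (sq_nonneg (e - s)), mul_nonneg he (sq_nonneg (d - s))]

theorem F4_majorant_le {a b c d e s E : ℝ} (ha : 0 ≤ a) (hb : 0 ≤ b) (hc : 0 ≤ c) (hd : 0 ≤ d)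
    (he : 0 ≤ e) (hs : 0 ≤ s) (hsum : a + b + (c + d + e + s) = 1)
    (hE : 2 * E ≤ (c + d + e + s) ^ 2) :
    a * b * E + (a + b) * (c * d * e + (c * d + c * e + d * e) * s) ≤ 4 / 243 := by
  set P := a + b
  set Q := c + d + e + s
  have hab : a * b ≤ P ^ 2 / 4 := by nlinarith [sq_nonneg (a - b)]
  have hcubic : P * (1 - P) ^ 2 * (1 + P) ≤ 64 / 243 := by
    have hP1 : 0 ≤ 1 - P := by linarith
    -- the maximum, about `0.202`, is attained near `P = 2 / 5`
    nlinarith [mul_nonneg (add_nonneg ha hb) hP1, sq_nonneg (P - 2 / 5),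
      mul_nonneg (mul_nonneg (add_nonneg ha hb) (add_nonneg ha hb)) hP1]
  calc a * b * E + P * (c * d * e + (c * d + c * e + d * e) * s)
      ≤ P ^ 2 / 4 * (Q ^ 2 / 2) + P * (Q ^ 3 / 16) := by
        gcongr ?_ + P * ?_
        · nlinarith [mul_nonneg ha hb, sq_nonneg Q]
        · linarith [esymm_three_le_cube_div_sixteen hc hd he hs]
    _ = P * (1 - P) ^ 2 * (1 + P) / 16 := by rw [show Q = 1 - P by linarith]; ring
    _ ≤ 4 / 243 := by linarith

theorem sum_prod_F4_le {n : ℕ} (hn : 5 ≤ n) {x : ℕ → ℝ} (hx : ∀ i, 0 ≤ x i) :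
    ∑ e ∈ F4 n, ∏ i ∈ e, x i ≤
      x 1 * x 2 * ∑ t ∈ (Icc 3 n).powersetCard 2, ∏ i ∈ t, x i +
        (x 1 + x 2) * (x 3 * x 4 * x 5 + (x 3 * x 4 + x 3 * x 5 + x 4 * x 5) *
          ∑ i ∈ Icc 6 n, x i) := by
  have hprod : 0 ≤ fun e : Finset ℕ => ∏ i ∈ e, x i := fun e => prod_nonneg fun i _ => hx i
  have h5 : ∑ i ∈ Icc 5 n, x i = x 5 + ∑ i ∈ Icc 6 n, x i :=
    sum_Icc_eq_add_sum_Icc_add_one (by omega) x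
  calc ∑ e ∈ F4 n, ∏ i ∈ e, x i
      ≤ ∑ e ∈ pairsWith 1 2 (Icc 3 n), ∏ i ∈ e, x i +
          ∑ e ∈ singlesWith 1 3 4 (Icc 5 n), ∏ i ∈ e, x i +
          ∑ e ∈ singlesWith 1 3 5 (Icc 6 n), ∏ i ∈ e, x i +
          ∑ e ∈ singlesWith 1 4 5 (Icc 6 n), ∏ i ∈ e, x i +
          ∑ e ∈ singlesWith 2 3 4 (Icc 5 n), ∏ i ∈ e, x i +
          ∑ e ∈ singlesWith 2 3 5 (Icc 6 n), ∏ i ∈ e, x i +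
          ∑ e ∈ singlesWith 2 4 5 (Icc 6 n), ∏ i ∈ e, x i := by
        unfold F4
        iterate 5 refine (sum_union_le_add _ _ hprod).trans (add_le_add_left ?_ _)
        exact sum_union_le_add _ _ hprod
    _ = _ := by
        have hsingles : ∀ {a b c m : ℕ}, a < b → b < c → c < m →
            ∑ e ∈ singlesWith a b c (Icc m n), ∏ i ∈ e, x i =
              x a * x b * x c * ∑ k ∈ Icc m n, x k := fun hab hbc hcm =>
          sum_prod_singlesWith hab.ne (hab.trans hbc).ne hbc.ne (by simp; omega) (by simp; omega)
            (by simp; omega) x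
        rw [sum_prod_pairsWith (by simp) (by simp) (by simp)]
        simp (disch := decide) only [hsingles, h5]
        ring

theorem lagN_le_of_forall {n : ℕ} {G : Finset (Finset ℕ)} {c : ℝ} (hc : 0 ≤ c)
    (h : ∀ x : ℕ → ℝ, (∀ i, 0 ≤ x i) → ∑ i ∈ Icc 1 n, x i = 1 → ∑ e ∈ G, ∏ i ∈ e, x i ≤ c) :
    lagN n G ≤ c := by
  refine Real.sSup_le ?_ hc
  rintro _ ⟨x, hx, hsum, rfl⟩
  exact h x hx hsum

/-- For `n ≥ 8`, `λ(F₄) ≤ 4/243 < 0.0169`. -/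
theorem lagrangian_F4 (n : ℕ) (hn : 8 ≤ n) :
    lagN n (F4 n) ≤ 4 / 243 ∧ (4 / 243 : ℝ) < 0.0169 := by
  refine ⟨lagN_le_of_forall (by norm_num) fun x hx hsum => ?_, by norm_num⟩
  have h3 : ∑ i ∈ Icc 3 n, x i = x 3 + x 4 + x 5 + ∑ i ∈ Icc 6 n, x i := by
    rw [sum_Icc_eq_add_sum_Icc_add_one (by omega), sum_Icc_eq_add_sum_Icc_add_one (by omega),
      sum_Icc_eq_add_sum_Icc_add_one (by omega)]
    ring
  have h1 : ∑ i ∈ Icc 1 n, x i = x 1 + x 2 + ∑ i ∈ Icc 3 n, x i := by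
    rw [sum_Icc_eq_add_sum_Icc_add_one (by omega), sum_Icc_eq_add_sum_Icc_add_one (by omega)]
    ring
  calc ∑ e ∈ F4 n, ∏ i ∈ e, x i
      ≤ _ := sum_prod_F4_le (by omega) hx
    _ ≤ 4 / 243 := F4_majorant_le (hx 1) (hx 2) (hx 3) (hx 4) (hx 5)
        (sum_nonneg fun i _ => hx i) (by rw [← h3, ← h1, hsum])
        (h3 ▸ two_mul_sum_powersetCard_two_le_sq _ x)
end

section
/- Let n ≥ 8 and let F₁₂ be the 4-graph on [n] with edge set {{1,2,i,j} : 3 ≤ i < j ≤ n} ∪ {{1,3,i,j} : 4 ≤ i < j ≤ n} ∪ {{1,4,i,j} : 5 ≤ i < j ≤ n} ∪ {{1,5,6,7}, {2,3,4,5}, {2,3,4,6}, {2,3,4,7}}. Then λ(F₁₂) ≤ 1/72 < 0.0169. -/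
set_option maxRecDepth 4000
set_option maxHeartbeats 1000000


open Finset

/-- The 4-graph `F₁₂` on `[n]`. -/
def F12 (n : ℕ) : Finset (Finset ℕ) :=
  pairsWith 1 2 (Finset.Icc 3 n) ∪ pairsWith 1 3 (Finset.Icc 4 n) ∪
    pairsWith 1 4 (Finset.Icc 5 n) ∪
    {({1, 5, 6, 7} : Finset ℕ), ({2, 3, 4, 5} : Finset ℕ), ({2, 3, 4, 6} : Finset ℕ),
      ({2, 3, 4, 7} : Finset ℕ)}

lemma e2_le (x : ℕ → ℝ) (s : Finset ℕ) :
    ∑ p ∈ s.powersetCard 2, ∏ i ∈ p, x i ≤ (∑ i ∈ s, x i)^2 / 2 := by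
  induction s using Finset.induction_on with
  | empty => rw [show (∅:Finset ℕ).powersetCard 2 = ∅ by decide]; simp
  | @insert a s ha ih =>
    rw [Finset.powersetCard_succ_insert ha, Finset.sum_union ?hdisj, Finset.sum_insert ha]
    case hdisj =>
      rw [Finset.disjoint_left]
      intro p hp hq
      simp only [Finset.mem_powersetCard, Finset.mem_image] at hp hq
      obtain ⟨q, hq1, rfl⟩ := hq
      exact ha (hp.1 (Finset.mem_insert_self a q))
    have himg : ∑ p ∈ (s.powersetCard 1).image (insert a), ∏ i ∈ p, x i
        = x a * ∑ i ∈ s, x i := by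
      rw [Finset.sum_image ?hinj]
      case hinj =>
        intro p hp q hq hpq
        simp only [Finset.mem_coe, Finset.mem_powersetCard] at hp hq
        have hap : a ∉ p := fun h => ha (hp.1 h)
        have haq : a ∉ q := fun h => ha (hq.1 h)
        rw [← Finset.erase_insert hap, hpq, Finset.erase_insert haq]
      rw [Finset.powersetCard_one]
      rw [Finset.sum_map, Finset.mul_sum]
      refine Finset.sum_congr rfl fun i hi => ?_
      have hai : a ∉ ({i} : Finset ℕ) := by
        simp only [Finset.mem_singleton]
        rintro rfl; exact ha hi
      simp [Finset.prod_insert hai]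
    rw [himg]
    nlinarith [sq_nonneg (x a), ih]

lemma pairs_le (x : ℕ → ℝ) (hx : ∀ i, 0 ≤ x i) (a b : ℕ) (s : Finset ℕ)
    (ha : a ∉ s) (hb : b ∉ s) (hab : a ≠ b) :
    ∑ e ∈ pairsWith a b s, ∏ i ∈ e, x i ≤ x a * x b * ((∑ i ∈ s, x i)^2 / 2) := by
  unfold pairsWith
  rw [Finset.sum_image ?hinj]
  case hinj =>
    intro p hp q hq hpq
    simp only [Finset.mem_coe, Finset.mem_powersetCard] at hp hq
    have hap : a ∉ insert b p := by
      simp only [Finset.mem_insert]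
      rintro (rfl | h); exact hab rfl; exact ha (hp.1 h)
    have haq : a ∉ insert b q := by
      simp only [Finset.mem_insert]
      rintro (rfl | h); exact hab rfl; exact ha (hq.1 h)
    have h2 := congrArg (Finset.erase · a) hpq
    simp only [Finset.erase_insert hap, Finset.erase_insert haq] at h2
    have hbp : b ∉ p := fun h => hb (hp.1 h)
    have hbq : b ∉ q := fun h => hb (hq.1 h)
    rw [← Finset.erase_insert hbp, h2, Finset.erase_insert hbq]
  have hstep : ∀ p ∈ s.powersetCard 2, ∏ i ∈ insert a (insert b p), x i
      = x a * x b * ∏ i ∈ p, x i := by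
    intro p hp
    simp only [Finset.mem_powersetCard] at hp
    have hbp : b ∉ p := fun h => hb (hp.1 h)
    have hap : a ∉ insert b p := by
      simp only [Finset.mem_insert]
      rintro (rfl | h); exact hab rfl; exact ha (hp.1 h)
    rw [Finset.prod_insert hap, Finset.prod_insert hbp, mul_assoc]
  rw [Finset.sum_congr rfl hstep, ← Finset.mul_sum]
  exact mul_le_mul_of_nonneg_left (e2_le x s) (mul_nonneg (hx a) (hx b))

lemma sum_union_le' (x : Finset ℕ → ℝ) (hx : ∀ e, 0 ≤ x e)
    (A B : Finset (Finset ℕ)) :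
    ∑ e ∈ A ∪ B, x e ≤ ∑ e ∈ A, x e + ∑ e ∈ B, x e := by
  have h := Finset.sum_union_inter (s₁ := A) (s₂ := B) (f := x)
  have h2 : 0 ≤ ∑ e ∈ A ∩ B, x e := Finset.sum_nonneg fun e _ => hx e
  linarith

lemma amgm3 (p q r : ℝ) (hp : 0 ≤ p) (hq : 0 ≤ q) (hr : 0 ≤ r) :
    p * q * r ≤ (p + q + r)^3 / 27 := by
  nlinarith [mul_nonneg hp (sq_nonneg (q-r)), mul_nonneg hq (sq_nonneg (p-r)),
    mul_nonneg hr (sq_nonneg (p-q)),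
    mul_nonneg (add_nonneg (add_nonneg hp hq) hr) (sq_nonneg (p-q)),
    mul_nonneg (add_nonneg (add_nonneg hp hq) hr) (sq_nonneg (q-r)),
    mul_nonneg (add_nonneg (add_nonneg hp hq) hr) (sq_nonneg (p-r))]

lemma key (a b c d s : ℝ) (ha : 0 ≤ a) (hb : 0 ≤ b) (hc : 0 ≤ c) (hd : 0 ≤ d)
    (hs : 0 ≤ s) (h : a + b + c + d + s = 1) :
    a*b*((c+d+s)^2/2) + a*c*((d+s)^2/2) + a*d*(s^2/2) + a*(s^3/27) + b*c*d*s ≤ 1/72 := by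
  have h4 : (a+b+c+d+s)^4 = 1 := by rw [h]; norm_num
  have t0 : (0:ℝ) ≤ a*c*(a - b)^2 := mul_nonneg (mul_nonneg ha hc) (sq_nonneg _)
  have t1 : (0:ℝ) ≤ a*c*(1*a - 2*b)^2 := mul_nonneg (mul_nonneg ha hc) (sq_nonneg _)
  have t2 : (0:ℝ) ≤ a*d*(1*a - 2*b)^2 := mul_nonneg (mul_nonneg ha hd) (sq_nonneg _)
  have t3 : (0:ℝ) ≤ a*s*(1*a - 2*b)^2 := mul_nonneg (mul_nonneg ha hs) (sq_nonneg _)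
  have t4 : (0:ℝ) ≤ b*b*(1*a - 2*b)^2 := mul_nonneg (mul_nonneg hb hb) (sq_nonneg _)
  have t5 : (0:ℝ) ≤ b*c*(1*a - 2*b)^2 := mul_nonneg (mul_nonneg hb hc) (sq_nonneg _)
  have t6 : (0:ℝ) ≤ c*d*(1*a - 2*b)^2 := mul_nonneg (mul_nonneg hc hd) (sq_nonneg _)
  have t7 : (0:ℝ) ≤ c*s*(1*a - 2*b)^2 := mul_nonneg (mul_nonneg hc hs) (sq_nonneg _)
  have t8 : (0:ℝ) ≤ d*d*(1*a - 2*b)^2 := mul_nonneg (mul_nonneg hd hd) (sq_nonneg _)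
  have t9 : (0:ℝ) ≤ d*s*(1*a - 2*b)^2 := mul_nonneg (mul_nonneg hd hs) (sq_nonneg _)
  have t10 : (0:ℝ) ≤ s*s*(1*a - 2*b)^2 := mul_nonneg (mul_nonneg hs hs) (sq_nonneg _)
  have t11 : (0:ℝ) ≤ c*c*(2*a - 3*b)^2 := mul_nonneg (mul_nonneg hc hc) (sq_nonneg _)
  have t12 : (0:ℝ) ≤ a*s*(1*a - 2*c)^2 := mul_nonneg (mul_nonneg ha hs) (sq_nonneg _)
  have t13 : (0:ℝ) ≤ b*d*(1*a - 2*c)^2 := mul_nonneg (mul_nonneg hb hd) (sq_nonneg _)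
  have t14 : (0:ℝ) ≤ c*s*(1*a - 2*c)^2 := mul_nonneg (mul_nonneg hc hs) (sq_nonneg _)
  have t15 : (0:ℝ) ≤ d*s*(1*a - 2*c)^2 := mul_nonneg (mul_nonneg hd hs) (sq_nonneg _)
  have t16 : (0:ℝ) ≤ a*d*(2*a - 3*c)^2 := mul_nonneg (mul_nonneg ha hd) (sq_nonneg _)
  have t17 : (0:ℝ) ≤ a*s*(2*a - 3*c)^2 := mul_nonneg (mul_nonneg ha hs) (sq_nonneg _)
  have t18 : (0:ℝ) ≤ b*c*(2*a - 3*c)^2 := mul_nonneg (mul_nonneg hb hc) (sq_nonneg _)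
  have t19 : (0:ℝ) ≤ b*d*(2*a - 3*c)^2 := mul_nonneg (mul_nonneg hb hd) (sq_nonneg _)
  have t20 : (0:ℝ) ≤ b*s*(2*a - 3*c)^2 := mul_nonneg (mul_nonneg hb hs) (sq_nonneg _)
  have t21 : (0:ℝ) ≤ c*c*(2*a - 3*c)^2 := mul_nonneg (mul_nonneg hc hc) (sq_nonneg _)
  have t22 : (0:ℝ) ≤ d*d*(2*a - 3*c)^2 := mul_nonneg (mul_nonneg hd hd) (sq_nonneg _)
  have t23 : (0:ℝ) ≤ s*s*(2*a - 3*c)^2 := mul_nonneg (mul_nonneg hs hs) (sq_nonneg _)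
  have t24 : (0:ℝ) ≤ a*c*(a - d)^2 := mul_nonneg (mul_nonneg ha hc) (sq_nonneg _)
  have t25 : (0:ℝ) ≤ a*d*(a - d)^2 := mul_nonneg (mul_nonneg ha hd) (sq_nonneg _)
  have t26 : (0:ℝ) ≤ b*b*(a - d)^2 := mul_nonneg (mul_nonneg hb hb) (sq_nonneg _)
  have t27 : (0:ℝ) ≤ b*d*(a - d)^2 := mul_nonneg (mul_nonneg hb hd) (sq_nonneg _)
  have t28 : (0:ℝ) ≤ c*d*(a - d)^2 := mul_nonneg (mul_nonneg hc hd) (sq_nonneg _)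
  have t29 : (0:ℝ) ≤ s*s*(a - d)^2 := mul_nonneg (mul_nonneg hs hs) (sq_nonneg _)
  have t30 : (0:ℝ) ≤ a*s*(2*a - 3*d)^2 := mul_nonneg (mul_nonneg ha hs) (sq_nonneg _)
  have t31 : (0:ℝ) ≤ b*c*(2*a - 3*d)^2 := mul_nonneg (mul_nonneg hb hc) (sq_nonneg _)
  have t32 : (0:ℝ) ≤ b*s*(2*a - 3*d)^2 := mul_nonneg (mul_nonneg hb hs) (sq_nonneg _)
  have t33 : (0:ℝ) ≤ s*s*(2*a - 3*d)^2 := mul_nonneg (mul_nonneg hs hs) (sq_nonneg _)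
  have t34 : (0:ℝ) ≤ a*s*(a - s)^2 := mul_nonneg (mul_nonneg ha hs) (sq_nonneg _)
  have t35 : (0:ℝ) ≤ b*c*(a - s)^2 := mul_nonneg (mul_nonneg hb hc) (sq_nonneg _)
  have t36 : (0:ℝ) ≤ b*d*(a - s)^2 := mul_nonneg (mul_nonneg hb hd) (sq_nonneg _)
  have t37 : (0:ℝ) ≤ c*d*(a - s)^2 := mul_nonneg (mul_nonneg hc hd) (sq_nonneg _)
  have t38 : (0:ℝ) ≤ s*s*(a - s)^2 := mul_nonneg (mul_nonneg hs hs) (sq_nonneg _)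
  have t39 : (0:ℝ) ≤ c*s*(2*a - 1*s)^2 := mul_nonneg (mul_nonneg hc hs) (sq_nonneg _)
  have t40 : (0:ℝ) ≤ d*s*(2*a - 1*s)^2 := mul_nonneg (mul_nonneg hd hs) (sq_nonneg _)
  have t41 : (0:ℝ) ≤ a*a*(3*a - 2*s)^2 := mul_nonneg (mul_nonneg ha ha) (sq_nonneg _)
  have t42 : (0:ℝ) ≤ a*b*(3*a - 2*s)^2 := mul_nonneg (mul_nonneg ha hb) (sq_nonneg _)
  have t43 : (0:ℝ) ≤ b*c*(3*a - 2*s)^2 := mul_nonneg (mul_nonneg hb hc) (sq_nonneg _)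
  have t44 : (0:ℝ) ≤ b*s*(3*a - 2*s)^2 := mul_nonneg (mul_nonneg hb hs) (sq_nonneg _)
  have t45 : (0:ℝ) ≤ d*s*(3*a - 2*s)^2 := mul_nonneg (mul_nonneg hd hs) (sq_nonneg _)
  have t46 : (0:ℝ) ≤ a*a*(b - c)^2 := mul_nonneg (mul_nonneg ha ha) (sq_nonneg _)
  have t47 : (0:ℝ) ≤ a*c*(b - c)^2 := mul_nonneg (mul_nonneg ha hc) (sq_nonneg _)
  have t48 : (0:ℝ) ≤ a*d*(b - c)^2 := mul_nonneg (mul_nonneg ha hd) (sq_nonneg _)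
  have t49 : (0:ℝ) ≤ d*s*(b - c)^2 := mul_nonneg (mul_nonneg hd hs) (sq_nonneg _)
  have t50 : (0:ℝ) ≤ a*a*(3*b - 2*c)^2 := mul_nonneg (mul_nonneg ha ha) (sq_nonneg _)
  have t51 : (0:ℝ) ≤ a*b*(3*b - 2*c)^2 := mul_nonneg (mul_nonneg ha hb) (sq_nonneg _)
  have t52 : (0:ℝ) ≤ b*c*(3*b - 2*c)^2 := mul_nonneg (mul_nonneg hb hc) (sq_nonneg _)
  have t53 : (0:ℝ) ≤ c*s*(b - d)^2 := mul_nonneg (mul_nonneg hc hs) (sq_nonneg _)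
  have t54 : (0:ℝ) ≤ d*s*(b - d)^2 := mul_nonneg (mul_nonneg hd hs) (sq_nonneg _)
  have t55 : (0:ℝ) ≤ a*d*(3*b - 2*d)^2 := mul_nonneg (mul_nonneg ha hd) (sq_nonneg _)
  have t56 : (0:ℝ) ≤ a*s*(3*b - 2*d)^2 := mul_nonneg (mul_nonneg ha hs) (sq_nonneg _)
  have t57 : (0:ℝ) ≤ b*d*(3*b - 2*d)^2 := mul_nonneg (mul_nonneg hb hd) (sq_nonneg _)
  have t58 : (0:ℝ) ≤ b*s*(3*b - 2*d)^2 := mul_nonneg (mul_nonneg hb hs) (sq_nonneg _)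
  have t59 : (0:ℝ) ≤ d*d*(3*b - 2*d)^2 := mul_nonneg (mul_nonneg hd hd) (sq_nonneg _)
  have t60 : (0:ℝ) ≤ a*s*(2*b - 1*s)^2 := mul_nonneg (mul_nonneg ha hs) (sq_nonneg _)
  have t61 : (0:ℝ) ≤ s*s*(2*b - 1*s)^2 := mul_nonneg (mul_nonneg hs hs) (sq_nonneg _)
  have t62 : (0:ℝ) ≤ a*s*(c - d)^2 := mul_nonneg (mul_nonneg ha hs) (sq_nonneg _)
  have t63 : (0:ℝ) ≤ b*s*(c - d)^2 := mul_nonneg (mul_nonneg hb hs) (sq_nonneg _)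
  have t64 : (0:ℝ) ≤ c*s*(c - d)^2 := mul_nonneg (mul_nonneg hc hs) (sq_nonneg _)
  have t65 : (0:ℝ) ≤ d*d*(c - d)^2 := mul_nonneg (mul_nonneg hd hd) (sq_nonneg _)
  have t66 : (0:ℝ) ≤ a*d*(2*c - 1*d)^2 := mul_nonneg (mul_nonneg ha hd) (sq_nonneg _)
  have t67 : (0:ℝ) ≤ c*d*(2*c - 1*d)^2 := mul_nonneg (mul_nonneg hc hd) (sq_nonneg _)
  have t68 : (0:ℝ) ≤ a*d*(3*c - 2*d)^2 := mul_nonneg (mul_nonneg ha hd) (sq_nonneg _)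
  linarith [h4, t0, t1, t2, t3, t4, t5, t6, t7, t8, t9, t10, t11, t12, t13, t14, t15, t16, t17, t18, t19, t20, t21, t22, t23, t24, t25, t26, t27, t28, t29, t30, t31, t32, t33, t34, t35, t36, t37, t38, t39, t40, t41, t42, t43, t44, t45, t46, t47, t48, t49, t50, t51, t52, t53, t54, t55, t56, t57, t58, t59, t60, t61, t62, t63, t64, t65, t66, t67, t68]


/-- For `n ≥ 8`, `λ(F₁₂) ≤ 1/72 < 0.0169`. -/
theorem lagrangian_F12 (n : ℕ) (hn : 8 ≤ n) :
    lagN n (F12 n) ≤ 1 / 72 ∧ (1 / 72 : ℝ) < 0.0169 := by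
  refine ⟨?_, by norm_num⟩
  apply Real.sSup_le _ (by norm_num)
  rintro v ⟨x, hx, hsum, rfl⟩
  have hprod : ∀ e : Finset ℕ, 0 ≤ ∏ i ∈ e, x i :=
    fun e => Finset.prod_nonneg fun i _ => hx i
  -- splitting of Icc sums
  have hstep : ∀ k, 1 ≤ k → k ≤ n → ∑ i ∈ Finset.Icc k n, x i
      = x k + ∑ i ∈ Finset.Icc (k+1) n, x i := by
    intro k _ hk
    rw [Finset.Icc_add_one_left_eq_Ioc, ← Finset.Ioc_insert_left hk, Finset.sum_insert (by simp)]
  have e1 := hstep 1 (by omega) (by omega)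
  have e2 := hstep 2 (by omega) (by omega)
  have e3 := hstep 3 (by omega) (by omega)
  have e4 := hstep 4 (by omega) (by omega)
  norm_num at e1 e2 e3 e4
  set s5 : ℝ := ∑ i ∈ Finset.Icc 5 n, x i with hs5
  have hs5n : 0 ≤ s5 := Finset.sum_nonneg fun i _ => hx i
  -- x5 + x6 + x7 ≤ s5
  have h567 : x 5 + x 6 + x 7 ≤ s5 := by
    have hsub : ({5,6,7} : Finset ℕ) ⊆ Finset.Icc 5 n := by
      intro i hi
      simp only [Finset.mem_insert, Finset.mem_singleton] at hi
      simp only [Finset.mem_Icc]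
      rcases hi with rfl | rfl | rfl <;> omega
    have := Finset.sum_le_sum_of_subset_of_nonneg hsub (fun i _ _ => hx i)
    rwa [Finset.sum_insert (by decide), Finset.sum_insert (by decide),
      Finset.sum_singleton, ← add_assoc] at this
  -- bound the three pair families
  have hP1 := pairs_le x hx 1 2 (Finset.Icc 3 n) (by simp) (by simp) (by norm_num)
  have hP2 := pairs_le x hx 1 3 (Finset.Icc 4 n) (by simp) (by simp) (by norm_num)
  have hP3 := pairs_le x hx 1 4 (Finset.Icc 5 n) (by simp) (by simp) (by norm_num)
  -- the four extra edges
  have hQ : ∑ e ∈ ({({1,5,6,7} : Finset ℕ), ({2,3,4,5} : Finset ℕ), ({2,3,4,6} : Finset ℕ),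
      ({2,3,4,7} : Finset ℕ)} : Finset (Finset ℕ)), ∏ i ∈ e, x i
      = x 1 * (x 5 * (x 6 * x 7)) + (x 2 * (x 3 * (x 4 * x 5))
        + (x 2 * (x 3 * (x 4 * x 6)) + x 2 * (x 3 * (x 4 * x 7)))) := by
    rw [Finset.sum_insert (by decide), Finset.sum_insert (by decide),
      Finset.sum_insert (by decide), Finset.sum_singleton]
    rw [show ({1,5,6,7} : Finset ℕ) = insert 1 (insert 5 (insert 6 {7})) from rfl,
      Finset.prod_insert (by decide), Finset.prod_insert (by decide),
      Finset.prod_insert (by decide), Finset.prod_singleton]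
    rw [show ({2,3,4,5} : Finset ℕ) = insert 2 (insert 3 (insert 4 {5})) from rfl,
      Finset.prod_insert (by decide), Finset.prod_insert (by decide),
      Finset.prod_insert (by decide), Finset.prod_singleton]
    rw [show ({2,3,4,6} : Finset ℕ) = insert 2 (insert 3 (insert 4 {6})) from rfl,
      Finset.prod_insert (by decide), Finset.prod_insert (by decide),
      Finset.prod_insert (by decide), Finset.prod_singleton]
    rw [show ({2,3,4,7} : Finset ℕ) = insert 2 (insert 3 (insert 4 {7})) from rfl,
      Finset.prod_insert (by decide), Finset.prod_insert (by decide),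
      Finset.prod_insert (by decide), Finset.prod_singleton]
  -- assemble
  have hunion : ∑ e ∈ F12 n, ∏ i ∈ e, x i ≤
      ∑ e ∈ pairsWith 1 2 (Finset.Icc 3 n), ∏ i ∈ e, x i
      + ∑ e ∈ pairsWith 1 3 (Finset.Icc 4 n), ∏ i ∈ e, x i
      + ∑ e ∈ pairsWith 1 4 (Finset.Icc 5 n), ∏ i ∈ e, x i
      + ∑ e ∈ ({({1,5,6,7} : Finset ℕ), ({2,3,4,5} : Finset ℕ), ({2,3,4,6} : Finset ℕ),
          ({2,3,4,7} : Finset ℕ)} : Finset (Finset ℕ)), ∏ i ∈ e, x i := by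
    unfold F12
    have u1 := sum_union_le' (fun e => ∏ i ∈ e, x i) hprod
      (pairsWith 1 2 (Finset.Icc 3 n) ∪ pairsWith 1 3 (Finset.Icc 4 n) ∪
        pairsWith 1 4 (Finset.Icc 5 n))
      ({({1,5,6,7} : Finset ℕ), ({2,3,4,5} : Finset ℕ), ({2,3,4,6} : Finset ℕ),
          ({2,3,4,7} : Finset ℕ)} : Finset (Finset ℕ))
    have u2 := sum_union_le' (fun e => ∏ i ∈ e, x i) hprod
      (pairsWith 1 2 (Finset.Icc 3 n) ∪ pairsWith 1 3 (Finset.Icc 4 n))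
      (pairsWith 1 4 (Finset.Icc 5 n))
    have u3 := sum_union_le' (fun e => ∏ i ∈ e, x i) hprod
      (pairsWith 1 2 (Finset.Icc 3 n)) (pairsWith 1 3 (Finset.Icc 4 n))
    linarith
  -- AM-GM for x5 x6 x7
  have hamgm : x 5 * (x 6 * x 7) ≤ s5^3/27 := by
    have h1 := amgm3 (x 5) (x 6) (x 7) (hx 5) (hx 6) (hx 7)
    have h2 : (x 5 + x 6 + x 7)^3 ≤ s5^3 :=
      pow_le_pow_left₀ (by linarith [hx 5, hx 6, hx 7]) h567 3
    rw [← mul_assoc]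
    calc x 5 * x 6 * x 7 ≤ (x 5 + x 6 + x 7)^3/27 := h1
      _ ≤ s5^3/27 := by linarith
  have hkey := key (x 1) (x 2) (x 3) (x 4) s5 (hx 1) (hx 2) (hx 3) (hx 4) hs5n
    (by linarith [hsum, e1, e2, e3, e4])
  have hbcd : 0 ≤ x 2 * (x 3 * x 4) := mul_nonneg (hx 2) (mul_nonneg (hx 3) (hx 4))
  have hx1 : 0 ≤ x 1 := hx 1
  rw [hQ] at hunion
  rw [e3, e4] at hP1
  rw [e4] at hP2
  nlinarith [hP1, hP2, hP3, hunion, hkey, mul_le_mul_of_nonneg_left hamgm hx1,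
    mul_le_mul_of_nonneg_left h567 hbcd]
end
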